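/- For any two graphs G₁ and G₂, thin(G₁ □ G₂) ≤ thin(G₁)·|V(G₂)|, where □ denotes the Cartesian product; the analogous bound holds for the proper thinness. -/

import Mathlib

open SimpleGraph

/-- An ordering (given by an injective rank function `f`) and a partition (given by a
coloring `c`) are consistent: for `r < s < t`, if `r, s` are in the same class and
`t` is adjacent to `r`, then `t` is adjacent to `s`. -/
def Consistent {V : Type*} (G : SimpleGraph V) (f : V → ℕ) (c : V → ℕ) : Prop :=
  ∀ r s t : V, f r < f s → f s < f t → c r = c s → G.Adj t r → G.Adj t s

/-- Strong consistency: consistency with the ordering and with its reverse. -/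
def StronglyConsistent {V : Type*} (G : SimpleGraph V) (f : V → ℕ) (c : V → ℕ) : Prop :=
  Consistent G f c ∧
    ∀ r s t : V, f r < f s → f s < f t → c s = c t → G.Adj t r → G.Adj s r

/-- The thinness of a graph. -/
noncomputable def thin {V : Type*} (G : SimpleGraph V) : ℕ :=
  sInf {k | ∃ f c : V → ℕ, Function.Injective f ∧ (∀ v, c v < k) ∧ Consistent G f c}

/-- The proper thinness of a graph. -/
noncomputable def pthin {V : Type*} (G : SimpleGraph V) : ℕ :=
  sInf {k | ∃ f c : V → ℕ, Function.Injective f ∧ (∀ v, c v < k) ∧ StronglyConsistent G f c}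

/-- Independent thinness: classes must be independent sets. -/
noncomputable def indthin {V : Type*} (G : SimpleGraph V) : ℕ :=
  sInf {k | ∃ f c : V → ℕ, Function.Injective f ∧ (∀ v, c v < k) ∧ Consistent G f c ∧
    ∀ u v : V, c u = c v → ¬ G.Adj u v}

/-- Independent proper thinness. -/
noncomputable def indpthin {V : Type*} (G : SimpleGraph V) : ℕ :=
  sInf {k | ∃ f c : V → ℕ, Function.Injective f ∧ (∀ v, c v < k) ∧ StronglyConsistent G f c ∧
    ∀ u v : V, c u = c v → ¬ G.Adj u v}

/-- Complete thinness: classes must be cliques. -/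
noncomputable def compthin {V : Type*} (G : SimpleGraph V) : ℕ :=
  sInf {k | ∃ f c : V → ℕ, Function.Injective f ∧ (∀ v, c v < k) ∧ Consistent G f c ∧
    ∀ u v : V, u ≠ v → c u = c v → G.Adj u v}

/-- Complete proper thinness. -/
noncomputable def comppthin {V : Type*} (G : SimpleGraph V) : ℕ :=
  sInf {k | ∃ f c : V → ℕ, Function.Injective f ∧ (∀ v, c v < k) ∧ StronglyConsistent G f c ∧
    ∀ u v : V, u ≠ v → c u = c v → G.Adj u v}

/-- The incompatibility graph `G_<` of a graph and an ordering: for `v < w`,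
`vw` is an edge iff there is `z > w` adjacent to `v` but not to `w`. -/
def incompat {V : Type*} (G : SimpleGraph V) (f : V → ℕ) : SimpleGraph V where
  Adj v w :=
    (f v < f w ∧ ∃ z, f w < f z ∧ G.Adj z v ∧ ¬ G.Adj z w) ∨
    (f w < f v ∧ ∃ z, f v < f z ∧ G.Adj z w ∧ ¬ G.Adj z v)
  symm := ⟨fun v w h => h.symm⟩
  loopless := ⟨fun v h => by rcases h with ⟨h, _⟩ | ⟨h, _⟩ <;> exact lt_irrefl _ h⟩

/-- The join of two graphs. -/
def joinG {V₁ V₂ : Type*} (G₁ : SimpleGraph V₁) (G₂ : SimpleGraph V₂) :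
    SimpleGraph (V₁ ⊕ V₂) where
  Adj x y := match x, y with
    | Sum.inl u, Sum.inl v => G₁.Adj u v
    | Sum.inr u, Sum.inr v => G₂.Adj u v
    | Sum.inl _, Sum.inr _ => True
    | Sum.inr _, Sum.inl _ => True
  symm := by constructor; rintro (u | u) (v | v) h
             · exact G₁.adj_symm h
             · trivial
             · trivial
             · exact G₂.adj_symm h
  loopless := by constructor; rintro (u | u) h
                 · exact G₁.loopless.irrefl u h
                 · exact G₂.loopless.irrefl u h

/-- A graph is complete iff all pairs of distinct vertices are adjacent. -/
def IsCompleteGraph {V : Type*} (G : SimpleGraph V) : Prop :=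
  ∀ u v : V, u ≠ v → G.Adj u v

/-- The clique number of a graph. -/
noncomputable def omegaNum {V : Type*} (G : SimpleGraph V) : ℕ :=
  sSup {n | ∃ s : Finset V, s.card = n ∧ ∀ u ∈ s, ∀ v ∈ s, u ≠ v → G.Adj u v}

/-- The independence number of a graph. -/
noncomputable def alphaNum {V : Type*} (G : SimpleGraph V) : ℕ :=
  sSup {n | ∃ s : Finset V, s.card = n ∧ ∀ u ∈ s, ∀ v ∈ s, u ≠ v → ¬ G.Adj u v}


/-!
Order `V₁ × V₂` lexicographically, first by a consistent ordering of `G₁` and then by an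
enumeration of `V₂`, and split each class `C` of `G₁` into the classes `C × {y}`. Two vertices
of one class lie in a common copy `V₁ × {y}`, on which order and partition are those of `G₁`.
An edge of a copy `{x} × G₂` stays inside the block `{x} × V₂`, an interval of the order that
meets each class at most once, so it never passes over a vertex of its endpoints' classes.
-/

open SimpleGraph

namespace Nat

theorem mul_add_lt_mul_add {a a' b b' n : ℕ} (hb : b < n) (h : a < a') :
    a * n + b < a' * n + b' := by
  nlinarith

theorem mul_add_eq_mul_add {a a' b b' n : ℕ} (hb : b < n) (hb' : b' < n)
    (h : a * n + b = a' * n + b') : a = a' ∧ b = b' := by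
  obtain rfl : a = a' := by
    by_contra hne
    rcases Nat.lt_or_gt_of_ne hne with hlt | hlt
    · exact (mul_add_lt_mul_add hb hlt).ne h
    · exact (mul_add_lt_mul_add hb' hlt).ne' h
  exact ⟨rfl, by omega⟩

end Nat

theorem Fintype.exists_injective_lt_card (V : Type*) [Fintype V] :
    ∃ g : V → ℕ, Function.Injective g ∧ ∀ v, g v < Fintype.card V :=
  ⟨fun v ↦ Fintype.equivFin V v, Fin.val_injective.comp (Fintype.equivFin V).injective,
    fun v ↦ (Fintype.equivFin V v).isLt⟩

section LexRank

variable {V₁ V₂ : Type*} {n : ℕ} {g : V₂ → ℕ}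

def lexRank (n : ℕ) (g : V₂ → ℕ) (f : V₁ → ℕ) (p : V₁ × V₂) : ℕ :=
  f p.1 * n + g p.2

theorem lexRank_lt_lexRank {f : V₁ → ℕ} (hgn : ∀ y, g y < n) {p q : V₁ × V₂}
    (h : f p.1 < f q.1) : lexRank n g f p < lexRank n g f q :=
  Nat.mul_add_lt_mul_add (hgn p.2) h

theorem lt_of_lexRank_lt_lexRank {f : V₁ → ℕ} {p q : V₁ × V₂} (h₂ : p.2 = q.2)
    (h : lexRank n g f p < lexRank n g f q) : f p.1 < f q.1 := by
  rw [lexRank, lexRank, h₂] at h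
  exact Nat.lt_of_mul_lt_mul_right (Nat.lt_of_add_lt_add_right h)

theorem lexRank_eq_lexRank {f : V₁ → ℕ} (hg : Function.Injective g) (hgn : ∀ y, g y < n)
    {p q : V₁ × V₂} (h : lexRank n g f p = lexRank n g f q) : f p.1 = f q.1 ∧ p.2 = q.2 :=
  (Nat.mul_add_eq_mul_add (hgn p.2) (hgn q.2) h).imp_right (hg ·)

theorem lexRank_injective {f : V₁ → ℕ} (hf : Function.Injective f)
    (hg : Function.Injective g) (hgn : ∀ y, g y < n) : Function.Injective (lexRank n g f) :=
  fun _ _ h ↦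
    have ⟨h₁, h₂⟩ := lexRank_eq_lexRank hg hgn h
    Prod.ext (hf h₁) h₂

theorem lexRank_lt_mul {c : V₁ → ℕ} {k : ℕ} (hgn : ∀ y, g y < n) (hc : ∀ x, c x < k)
    (p : V₁ × V₂) : lexRank n g c p < k * n :=
  calc lexRank n g c p < (c p.1 + 1) * n := by
        rw [lexRank, add_one_mul]; exact Nat.add_lt_add_left (hgn p.2) _
    _ ≤ k * n := Nat.mul_le_mul_right n (hc p.1)

variable {G₁ : SimpleGraph V₁} {G₂ : SimpleGraph V₂} {f c : V₁ → ℕ}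

theorem Consistent.boxProd (h : Consistent G₁ f c) (hg : Function.Injective g)
    (hgn : ∀ y, g y < n) :
    Consistent (G₁ □ G₂) (lexRank n g f) (lexRank n g c) := by
  intro r s t hrs hst hc hadj
  obtain ⟨hc₁, hrs₂⟩ := lexRank_eq_lexRank hg hgn hc
  have hrs₁ : f r.1 < f s.1 := lt_of_lexRank_lt_lexRank hrs₂ hrs
  rcases boxProd_adj.mp hadj with ⟨hadj₁, htr₂⟩ | ⟨-, htr₁⟩
  · have hst₁ : f s.1 < f t.1 := lt_of_lexRank_lt_lexRank (hrs₂ ▸ htr₂.symm) hst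
    exact boxProd_adj.mpr (Or.inl ⟨h r.1 s.1 t.1 hrs₁ hst₁ hc₁ hadj₁, htr₂.trans hrs₂⟩)
  · exact absurd hst (lexRank_lt_lexRank hgn (htr₁ ▸ hrs₁)).asymm

theorem StronglyConsistent.boxProd (h : StronglyConsistent G₁ f c)
    (hg : Function.Injective g) (hgn : ∀ y, g y < n) :
    StronglyConsistent (G₁ □ G₂) (lexRank n g f) (lexRank n g c) := by
  refine ⟨h.1.boxProd hg hgn, fun r s t hrs hst hc hadj ↦ ?_⟩
  obtain ⟨hc₁, hst₂⟩ := lexRank_eq_lexRank hg hgn hc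
  have hst₁ : f s.1 < f t.1 := lt_of_lexRank_lt_lexRank hst₂ hst
  rcases boxProd_adj.mp hadj with ⟨hadj₁, htr₂⟩ | ⟨-, htr₁⟩
  · have hsr₂ : s.2 = r.2 := hst₂.trans htr₂
    have hrs₁ : f r.1 < f s.1 := lt_of_lexRank_lt_lexRank hsr₂.symm hrs
    exact boxProd_adj.mpr (Or.inl ⟨h.2 r.1 s.1 t.1 hrs₁ hst₁ hc₁ hadj₁, hsr₂⟩)
  · exact absurd hrs (lexRank_lt_lexRank hgn (htr₁ ▸ hst₁)).asymm

end LexRank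

section Thinness

variable {V : Type*} {G : SimpleGraph V}

theorem stronglyConsistent_of_injective {f c : V → ℕ} (hc : Function.Injective c) :
    StronglyConsistent G f c :=
  ⟨fun _ _ _ hrs _ h _ ↦ absurd (hc h) (ne_of_apply_ne f hrs.ne),
    fun _ _ _ _ hst h _ ↦ absurd (hc h) (ne_of_apply_ne f hst.ne)⟩

theorem exists_stronglyConsistent [Fintype V] (G : SimpleGraph V) :
    ∃ f c : V → ℕ, Function.Injective f ∧ (∀ v, c v < Fintype.card V) ∧
      StronglyConsistent G f c :=
  have ⟨g, hg, hgn⟩ := Fintype.exists_injective_lt_card V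
  ⟨g, g, hg, hgn, stronglyConsistent_of_injective hg⟩

theorem exists_consistent_thin [Fintype V] (G : SimpleGraph V) :
    ∃ f c : V → ℕ, Function.Injective f ∧ (∀ v, c v < thin G) ∧ Consistent G f c := by
  obtain ⟨f, c, hf, hc, h⟩ := exists_stronglyConsistent G
  exact Nat.sInf_mem (s := {k | ∃ f c : V → ℕ, Function.Injective f ∧ (∀ v, c v < k) ∧
    Consistent G f c}) ⟨_, f, c, hf, hc, h.1⟩

theorem exists_stronglyConsistent_pthin [Fintype V] (G : SimpleGraph V) :
    ∃ f c : V → ℕ, Function.Injective f ∧ (∀ v, c v < pthin G) ∧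
      StronglyConsistent G f c :=
  Nat.sInf_mem (s := {k | ∃ f c : V → ℕ, Function.Injective f ∧ (∀ v, c v < k) ∧
    StronglyConsistent G f c}) ⟨_, exists_stronglyConsistent G⟩

theorem thin_le {f c : V → ℕ} {k : ℕ} (hf : Function.Injective f) (hc : ∀ v, c v < k)
    (h : Consistent G f c) : thin G ≤ k :=
  Nat.sInf_le ⟨f, c, hf, hc, h⟩

theorem pthin_le {f c : V → ℕ} {k : ℕ} (hf : Function.Injective f) (hc : ∀ v, c v < k)
    (h : StronglyConsistent G f c) : pthin G ≤ k :=
  Nat.sInf_le ⟨f, c, hf, hc, h⟩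

end Thinness

/-- Thinness (and proper thinness) of a Cartesian product is at most the (proper)
thinness of the first factor times the number of vertices of the second. -/
theorem thin_boxProd {V₁ V₂ : Type*} [Fintype V₁] [Fintype V₂]
    (G₁ : SimpleGraph V₁) (G₂ : SimpleGraph V₂) :
    thin (G₁ □ G₂) ≤ thin G₁ * Fintype.card V₂ ∧
    pthin (G₁ □ G₂) ≤ pthin G₁ * Fintype.card V₂ := by
  obtain ⟨g, hg, hgn⟩ := Fintype.exists_injective_lt_card V₂
  obtain ⟨f, c, hf, hc, h⟩ := exists_consistent_thin G₁
  obtain ⟨f', c', hf', hc', h'⟩ := exists_stronglyConsistent_pthin G₁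
  exact ⟨thin_le (lexRank_injective hf hg hgn) (lexRank_lt_mul hgn hc) (h.boxProd hg hgn),
    pthin_le (lexRank_injective hf' hg hgn) (lexRank_lt_mul hgn hc') (h'.boxProd hg hgn)⟩
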